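/- Let ρ be a quantum state on ℂ^d (positive semidefinite with trace 1), let Λ be a d×d matrix with 0 ≤ Λ ≤ I, and suppose Tr{Λ ρ} ≥ 1 − ε for some ε ≥ 0. Then there exists a unitary U on ℂ^d ⊗ ℂ² such that, with the orthogonal projection Π = U† (I_d ⊗ |0⟩⟨0|) U, one has Tr{Π (ρ ⊗ |0⟩⟨0|)} = Tr{Λ ρ} and ‖ ρ ⊗ |0⟩⟨0| − Π (ρ ⊗ |0⟩⟨0|) Π ‖₁ ≤ 2√ε. -/

import Mathlib

/-
Write `Λ = A²` and `1 - Λ = B²` with commuting Hermitian square roots `A`, `B`. In block form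
`U = [[A, -B], [B, A]] = A ⊗ 1 + B ⊗ J` with `J² = -1`, so `U` multiplies like the complex
number `A + iB` and is unitary because `A² + B² = 1`. Its `|0⟩⟨0|`-corner is `A`, whence
`Tr (Π (ρ ⊗ |0⟩⟨0|)) = Tr (A² ρ) = Tr (Λ ρ)`.

The bound is the gentle operator lemma for a state `σ` and a projection `P` with
`Tr (P σ) = 1 - t`, `t ≤ ε`: write `σ - P σ P = Q σ + P σ Q` with `Q = 1 - P` and realise the
trace norm of this Hermitian matrix as `Re Tr (W ·)` for a unitary `W` (the sign of the matrix).
Each of the two terms is at most `√t` by Cauchy–Schwarz for the `σ`-weighted form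
`(X, Y) ↦ Tr (Y σ Xᴴ)`.
-/

open Matrix Kronecker ComplexOrder

/-- The trace norm `‖A‖₁ = Tr √(A† A)` of a complex matrix. -/
noncomputable def traceNorm {n : Type*} [Fintype n] [DecidableEq n]
    (A : Matrix n n ℂ) : ℝ :=
  ((Matrix.posSemidef_conjTranspose_mul_self A).1.eigenvectorUnitary.1 *
      Matrix.diagonal (((↑) : ℝ → ℂ) ∘ (√·) ∘ (Matrix.posSemidef_conjTranspose_mul_self A).1.eigenvalues) *
      (star (Matrix.posSemidef_conjTranspose_mul_self A).1.eigenvectorUnitary : Matrix n n ℂ)).trace.re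

open scoped MatrixOrder

theorem Matrix.neg_kronecker {l m n p R : Type*} [Ring R] (A : Matrix l m R) (B : Matrix n p R) :
    (-A) ⊗ₖ B = -(A ⊗ₖ B) := by
  ext; simp

theorem Matrix.kronecker_neg {l m n p R : Type*} [Ring R] (A : Matrix l m R) (B : Matrix n p R) :
    A ⊗ₖ (-B) = -(A ⊗ₖ B) := by
  ext; simp

theorem IsStarProjection.star_mul_mul_of_mem_unitary {A : Type*} [Ring A] [StarRing A] {p u : A}
    (hp : IsStarProjection p) (hu : u ∈ unitary A) : IsStarProjection (star u * p * u) where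
  isIdempotentElem := by
    rw [IsIdempotentElem, mul_assoc, ← mul_assoc u, ← mul_assoc u,
      Unitary.mul_star_self_of_mem hu, one_mul, ← mul_assoc _ p, mul_assoc _ p p,
      hp.isIdempotentElem.eq]
  isSelfAdjoint := by
    rw [IsSelfAdjoint, star_mul, star_mul, star_star, hp.isSelfAdjoint.star_eq, mul_assoc]

section MatrixTrace

variable {n R : Type*} [Fintype n] [CommRing R] [StarRing R]

theorem Matrix.isStarProjection_single_one [DecidableEq n] (i : n) :
    IsStarProjection (single i i (1 : R)) where
  isIdempotentElem := by simp [IsIdempotentElem]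
  isSelfAdjoint := by simp [IsSelfAdjoint, star_eq_conjTranspose]

theorem IsStarProjection.kronecker {m : Type*} [Fintype m]
    {p : Matrix m m R} {q : Matrix n n R} (hp : IsStarProjection p) (hq : IsStarProjection q) :
    IsStarProjection (p ⊗ₖ q) where
  isIdempotentElem := by
    rw [IsIdempotentElem, ← mul_kronecker_mul, hp.isIdempotentElem.eq, hq.isIdempotentElem.eq]
  isSelfAdjoint := by
    rw [IsSelfAdjoint, star_eq_conjTranspose, conjTranspose_kronecker, ← star_eq_conjTranspose,
      ← star_eq_conjTranspose, hp.isSelfAdjoint.star_eq, hq.isSelfAdjoint.star_eq]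

theorem IsStarProjection.trace_mul_mul_conjTranspose {P : Matrix n n R} (hP : IsStarProjection P)
    (σ : Matrix n n R) : (P * σ * Pᴴ).trace = (P * σ).trace := by
  rw [← star_eq_conjTranspose, hP.isSelfAdjoint.star_eq, trace_mul_cycle, hP.isIdempotentElem.eq,
    trace_mul_comm]

theorem Matrix.trace_unitary_mul_mul_conjTranspose [DecidableEq n] {W : Matrix n n R}
    (hW : W ∈ unitary _) (Z σ : Matrix n n R) :
    (W * Z * σ * (W * Z)ᴴ).trace = (Z * σ * Zᴴ).trace := by
  have hassoc : W * Z * σ * (Zᴴ * star W) = W * (Z * σ * Zᴴ) * star W := by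
    simp only [mul_assoc]
  rw [conjTranspose_mul, ← star_eq_conjTranspose W, hassoc, trace_mul_cycle,
    Unitary.star_mul_self_of_mem hW, one_mul]

end MatrixTrace

theorem Matrix.PosSemidef.norm_trace_mul_mul_conjTranspose_sq_le {n 𝕜 : Type*} [Fintype n]
    [RCLike 𝕜] {σ : Matrix n n 𝕜} (hσ : σ.PosSemidef) (X Y : Matrix n n 𝕜) :
    ‖(Y * σ * Xᴴ).trace‖ ^ 2 ≤
      RCLike.re (X * σ * Xᴴ).trace * RCLike.re (Y * σ * Yᴴ).trace := by
  let := σ.toMatrixSeminormedAddCommGroup hσ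
  let := σ.toMatrixInnerProductSpace hσ
  have := inner_mul_inner_self_le (𝕜 := 𝕜) X Y
  rwa [norm_inner_symm Y X, ← sq] at this

section TraceNorm

variable {n : Type*} [Fintype n] [DecidableEq n]

theorem traceNorm_eq_re_trace_abs (A : Matrix n n ℂ) : traceNorm A = (CFC.abs A).trace.re := by
  have hA := posSemidef_conjTranspose_mul_self A
  rw [CFC.abs, star_eq_conjTranspose, CFC.sqrt_eq_real_sqrt _ hA.nonneg,
    cfcₙ_eq_cfc (hf0 := Real.sqrt_zero), hA.1.cfc_eq]
  rfl

theorem Matrix.IsHermitian.exists_unitary_traceNorm_eq {M : Matrix n n ℂ} (hM : M.IsHermitian) :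
    ∃ W ∈ unitary (Matrix n n ℂ), traceNorm M = (W * M).trace.re := by
  let sgn : ℝ → ℝ := fun x => if 0 ≤ x then 1 else -1
  -- the spectrum is finite, so even this discontinuous `sgn` may be fed to `cfc`
  have hcont : ContinuousOn sgn (spectrum ℝ M) := M.finite_real_spectrum.continuousOn _
  have hsgn_mul : cfc sgn M * M = cfc (‖·‖) M :=
    calc cfc sgn M * M = cfc sgn M * cfc (fun x => x) M := by rw [cfc_id' ℝ M]
      _ = cfc (fun x => sgn x * x) M := (cfc_mul _ _ M).symm
      _ = cfc (‖·‖) M := cfc_congr fun x _ => by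
        by_cases hx : 0 ≤ x
        · simp [sgn, hx, abs_of_nonneg hx]
        · simp [sgn, hx, abs_of_neg (not_le.mp hx)]
  refine ⟨cfc sgn M, (cfc_unitary_iff sgn M).mpr fun x _ => ?_, ?_⟩
  · by_cases hx : 0 ≤ x <;> simp [sgn, hx]
  · rw [hsgn_mul, traceNorm_eq_re_trace_abs, CFC.abs_eq_cfc_norm M hM.isSelfAdjoint]

theorem traceNorm_sub_mul_mul_le_two_mul_sqrt {σ P : Matrix n n ℂ} (hσ : σ.PosSemidef)
    (hσtr : σ.trace = 1) (hP : IsStarProjection P) {ε : ℝ} (h : 1 - ε ≤ (P * σ).trace.re) :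
    traceNorm (σ - P * σ * P) ≤ 2 * √ε := by
  set Q := 1 - P
  have hQ : IsStarProjection Q := hP.one_sub
  set t := (Q * σ).trace.re
  have hPt : (P * σ).trace.re = 1 - t := by
    simp [t, Q, sub_mul, trace_sub, hσtr]
  have hdecomp : σ - P * σ * P = Q * σ + P * σ * Q := by
    simp only [Q, sub_mul, mul_sub, one_mul, mul_one]
    abel
  have hherm : (σ - P * σ * P).IsHermitian := by
    have hPH : Pᴴ = P := hP.isSelfAdjoint
    simpa only [hPH] using hσ.1.sub (isHermitian_mul_mul_conjTranspose P hσ.1)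
  obtain ⟨W, hW, hnorm⟩ := hherm.exists_unitary_traceNorm_eq
  have h₁ : ‖(W * Q * σ).trace‖ ^ 2 ≤ t := by
    have := hσ.norm_trace_mul_mul_conjTranspose_sq_le 1 (W * Q)
    rwa [trace_unitary_mul_mul_conjTranspose hW, hQ.trace_mul_mul_conjTranspose,
      conjTranspose_one, mul_one, one_mul, mul_one, hσtr, RCLike.one_re, one_mul] at this
  have h₂ : ‖(W * P * σ * Q).trace‖ ^ 2 ≤ t := by
    have := hσ.norm_trace_mul_mul_conjTranspose_sq_le Q (W * P)
    rw [trace_unitary_mul_mul_conjTranspose hW, hQ.trace_mul_mul_conjTranspose,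
      hP.trace_mul_mul_conjTranspose, show Qᴴ = Q from hQ.isSelfAdjoint, RCLike.re_to_complex,
      RCLike.re_to_complex, hPt] at this
    nlinarith [sq_nonneg t]
  calc traceNorm (σ - P * σ * P)
      = (W * Q * σ).trace.re + (W * P * σ * Q).trace.re := by
        rw [hnorm, hdecomp, mul_add, trace_add, Complex.add_re]
        simp only [mul_assoc]
    _ ≤ √t + √t := add_le_add ((Complex.re_le_norm _).trans (Real.le_sqrt_of_sq_le h₁))
        ((Complex.re_le_norm _).trans (Real.le_sqrt_of_sq_le h₂))
    _ ≤ 2 * √ε := by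
        have : √t ≤ √ε := Real.sqrt_le_sqrt (by linarith)
        linarith

end TraceNorm

section NaimarkUnitary

variable {m R : Type*} [CommRing R]

def quarterTurn : Matrix (Fin 2) (Fin 2) R := !![0, -1; 1, 0]

theorem conjTranspose_quarterTurn [StarRing R] :
    (quarterTurn : Matrix (Fin 2) (Fin 2) R)ᴴ = -quarterTurn := by
  ext i j; fin_cases i <;> fin_cases j <;> simp [quarterTurn]

theorem quarterTurn_mul_self : (quarterTurn : Matrix (Fin 2) (Fin 2) R) * quarterTurn = -1 := by
  ext i j; fin_cases i <;> fin_cases j <;> simp [quarterTurn]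

theorem quarterTurn_mul_single_zero_zero :
    (quarterTurn : Matrix (Fin 2) (Fin 2) R) * single 0 0 1 = single 1 0 1 := by
  ext i j; fin_cases i <;> fin_cases j <;> simp [quarterTurn]

def naimarkUnitary (A B : Matrix m m R) : Matrix (m × Fin 2) (m × Fin 2) R :=
  A ⊗ₖ 1 + B ⊗ₖ quarterTurn

theorem conjTranspose_naimarkUnitary [StarRing R] (A B : Matrix m m R) :
    (naimarkUnitary A B)ᴴ = naimarkUnitary Aᴴ (-Bᴴ) := by
  simp [naimarkUnitary, conjTranspose_kronecker, conjTranspose_quarterTurn, kronecker_neg,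
    neg_kronecker]

variable [DecidableEq m]

theorem naimarkUnitary_one_zero : naimarkUnitary (1 : Matrix m m R) 0 = 1 := by
  simp [naimarkUnitary]

variable [Fintype m]

theorem naimarkUnitary_mul_naimarkUnitary (A B A' B' : Matrix m m R) :
    naimarkUnitary A B * naimarkUnitary A' B' =
      naimarkUnitary (A * A' - B * B') (A * B' + B * A') := by
  simp only [naimarkUnitary, add_mul, mul_add, ← mul_kronecker_mul, one_mul, mul_one,
    quarterTurn_mul_self, kronecker_neg, sub_eq_add_neg, neg_kronecker, add_kronecker]
  abel

theorem one_kronecker_single_mul_naimarkUnitary_mul (A B ρ : Matrix m m R) :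
    (1 ⊗ₖ single 0 0 1) * naimarkUnitary A B * (ρ ⊗ₖ single 0 0 1) =
      (A * ρ) ⊗ₖ single 0 0 1 := by
  simp [naimarkUnitary, add_mul, mul_add, ← mul_kronecker_mul, mul_assoc,
    quarterTurn_mul_single_zero_zero]

variable [StarRing R]

theorem naimarkUnitary_mem_unitary {A B : Matrix m m R} (hA : Aᴴ = A) (hB : Bᴴ = B)
    (hAB : Commute A B) (h : A * A + B * B = 1) : naimarkUnitary A B ∈ unitary _ := by
  rw [Unitary.mem_iff, star_eq_conjTranspose, conjTranspose_naimarkUnitary, hA, hB,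
    naimarkUnitary_mul_naimarkUnitary, naimarkUnitary_mul_naimarkUnitary]
  simp only [neg_mul, mul_neg, sub_neg_eq_add, h, hAB.eq, neg_add_cancel, add_neg_cancel,
    naimarkUnitary_one_zero, and_self]

theorem trace_conjTranspose_naimarkUnitary_mul (A B ρ : Matrix m m R) :
    ((naimarkUnitary A B)ᴴ * (1 ⊗ₖ single 0 0 1) * naimarkUnitary A B *
      (ρ ⊗ₖ single 0 0 1)).trace = (Aᴴ * A * ρ).trace := by
  rw [mul_assoc _ (1 ⊗ₖ _), mul_assoc, one_kronecker_single_mul_naimarkUnitary_mul,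
    conjTranspose_naimarkUnitary]
  simp [naimarkUnitary, add_mul, ← mul_kronecker_mul, trace_kronecker,
    quarterTurn_mul_single_zero_zero, mul_assoc]

end NaimarkUnitary

theorem gentle_naimark_general {d : ℕ} (ρ Λ : Matrix (Fin d) (Fin d) ℂ)
    (hρ : ρ.PosSemidef) (hρtr : ρ.trace = 1)
    (hΛ : Λ.PosSemidef) (hΛI : ((1 : Matrix (Fin d) (Fin d) ℂ) - Λ).PosSemidef)
    (ε : ℝ) (h : 1 - ε ≤ (Λ * ρ).trace.re) :
    ∃ U : Matrix (Fin d × Fin 2) (Fin d × Fin 2) ℂ,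
      Uᴴ * U = 1 ∧ U * Uᴴ = 1 ∧
      ((Uᴴ * ((1 : Matrix (Fin d) (Fin d) ℂ)
            ⊗ₖ Matrix.single (0 : Fin 2) (0 : Fin 2) (1 : ℂ)) * U) *
          (ρ ⊗ₖ Matrix.single (0 : Fin 2) (0 : Fin 2) (1 : ℂ))).trace
        = (Λ * ρ).trace ∧
      traceNorm (ρ ⊗ₖ Matrix.single (0 : Fin 2) (0 : Fin 2) (1 : ℂ)
          - (Uᴴ * ((1 : Matrix (Fin d) (Fin d) ℂ)
                ⊗ₖ Matrix.single (0 : Fin 2) (0 : Fin 2) (1 : ℂ)) * U) *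
              (ρ ⊗ₖ Matrix.single (0 : Fin 2) (0 : Fin 2) (1 : ℂ)) *
              (Uᴴ * ((1 : Matrix (Fin d) (Fin d) ℂ)
                ⊗ₖ Matrix.single (0 : Fin 2) (0 : Fin 2) (1 : ℂ)) * U))
        ≤ 2 * Real.sqrt ε := by
  set A := CFC.sqrt Λ
  set B := CFC.sqrt (1 - Λ)
  have hA : Aᴴ = A := (CFC.sqrt_nonneg Λ).isSelfAdjoint
  have hB : Bᴴ = B := (CFC.sqrt_nonneg _).isSelfAdjoint
  have hAA : A * A = Λ := CFC.sqrt_mul_sqrt_self Λ hΛ.nonneg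
  have hBB : B * B = 1 - Λ := CFC.sqrt_mul_sqrt_self _ hΛI.nonneg
  have hAB : Commute A B := by
    have hΛ_comm : Commute Λ (1 - Λ) := (Commute.one_right Λ).sub_right (Commute.refl Λ)
    simpa only [A, B, CFC.sqrt_eq_cfc] using
      ((hΛ_comm.cfc_nnreal NNReal.sqrt).symm.cfc_nnreal NNReal.sqrt).symm
  have hU := naimarkUnitary_mem_unitary hA hB hAB (by rw [hAA, hBB, add_sub_cancel])
  have htrace := trace_conjTranspose_naimarkUnitary_mul A B ρ
  rw [hA, hAA] at htrace
  have hE := isStarProjection_single_one (R := ℂ) (0 : Fin 2)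
  refine ⟨naimarkUnitary A B, Unitary.star_mul_self_of_mem hU, Unitary.mul_star_self_of_mem hU,
    htrace, traceNorm_sub_mul_mul_le_two_mul_sqrt (hρ.kronecker hE.nonneg.posSemidef) ?_
      (((IsStarProjection.one _).kronecker hE).star_mul_mul_of_mem_unitary hU) (htrace ▸ h)⟩
  rw [trace_kronecker, hρtr, trace_single_eq_same, one_mul]

/-- **Gentle measurement via a Naimark extension.**
For a quantum state `ρ` and `0 ≤ Λ ≤ I` with `Tr (Λ ρ) ≥ 1 − ε`, `ε ≥ 0`, there is a
unitary `U` on `ℂ^d ⊗ ℂ²` such that the projection `Π = U† (I ⊗ |0⟩⟨0|) U` satisfies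
`Tr (Π (ρ ⊗ |0⟩⟨0|)) = Tr (Λ ρ)` and `‖ρ ⊗ |0⟩⟨0| − Π (ρ ⊗ |0⟩⟨0|) Π‖₁ ≤ 2 √ε`. -/
theorem gentle_naimark {d : ℕ} (ρ Λ : Matrix (Fin d) (Fin d) ℂ)
    (hρ : ρ.PosSemidef) (hρtr : ρ.trace = 1)
    (hΛ : Λ.PosSemidef) (hΛI : ((1 : Matrix (Fin d) (Fin d) ℂ) - Λ).PosSemidef)
    (ε : ℝ) (hε : 0 ≤ ε) (h : 1 - ε ≤ (Λ * ρ).trace.re) :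
    ∃ U : Matrix (Fin d × Fin 2) (Fin d × Fin 2) ℂ,
      Uᴴ * U = 1 ∧ U * Uᴴ = 1 ∧
      ((Uᴴ * ((1 : Matrix (Fin d) (Fin d) ℂ)
            ⊗ₖ Matrix.single (0 : Fin 2) (0 : Fin 2) (1 : ℂ)) * U) *
          (ρ ⊗ₖ Matrix.single (0 : Fin 2) (0 : Fin 2) (1 : ℂ))).trace
        = (Λ * ρ).trace ∧
      traceNorm (ρ ⊗ₖ Matrix.single (0 : Fin 2) (0 : Fin 2) (1 : ℂ)
          - (Uᴴ * ((1 : Matrix (Fin d) (Fin d) ℂ)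
                ⊗ₖ Matrix.single (0 : Fin 2) (0 : Fin 2) (1 : ℂ)) * U) *
              (ρ ⊗ₖ Matrix.single (0 : Fin 2) (0 : Fin 2) (1 : ℂ)) *
              (Uᴴ * ((1 : Matrix (Fin d) (Fin d) ℂ)
                ⊗ₖ Matrix.single (0 : Fin 2) (0 : Fin 2) (1 : ℂ)) * U))
        ≤ 2 * Real.sqrt ε :=
  gentle_naimark_general ρ Λ hρ hρtr hΛ hΛI ε h
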